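/- arXiv:2102.06727 — 2 statements merged into one kernel-verified Lean document; each statement's English description precedes it below -/
import Mathlib

section
/- (Soundness of the While rule) Let P, P', Q be programs, B a predicate on states, and C the relation of the loop body. Assume pst(P') = pst(P) ∩ {s | B s}, pst(Q) = pst(P) ∩ {s | ¬ B s}, and the operational triple ⟨P'⟩ C ⟨P⟩ holds. Then the operational triple ⟨P⟩ while B do C ⟨Q⟩ holds, where the relation of the while loop is ⋃ over n of ((test B ; C) iterated n times) ; test(¬B). -/
def pst {σ : Type*} (R : σ → σ → Prop) : Set σ := {t | ∃ s, R s t}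

def seqc {σ : Type*} (R S : σ → σ → Prop) : σ → σ → Prop :=
  fun s t => ∃ u, R s u ∧ S u t

def triple {σ : Type*} (P C Q : σ → σ → Prop) : Prop :=
  pst (seqc P C) ⊆ pst Q

def test {σ : Type*} (B : σ → Prop) : σ → σ → Prop :=
  fun s t => s = t ∧ B s

def iter {σ : Type*} (R : σ → σ → Prop) : ℕ → (σ → σ → Prop)
  | 0 => fun s t => s = t
  | (n + 1) => seqc R (iter R n)

def whileRel {σ : Type*} (B : σ → Prop) (C : σ → σ → Prop) : σ → σ → Prop :=
  fun s t => ∃ n : ℕ, seqc (iter (seqc (test B) C) n) (test (fun s => ¬ B s)) s t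

/-! The post-states of `P` form an invariant of the guarded body `test B ; C`, by the
triple for `P'`; hence every exit state of the loop lies in `pst P` and fails `B`. -/

theorem mem_of_iter {σ : Type*} {R : σ → σ → Prop} {I : Set σ}
    (hI : ∀ u v, u ∈ I → R u v → v ∈ I) :
    ∀ {n : ℕ} {u t : σ}, iter R n u t → u ∈ I → t ∈ I
  | 0, _, _, rfl, hu => hu
  | _ + 1, u, _, ⟨v, huv, hvt⟩, hu => mem_of_iter hI hvt (hI u v hu huv)

theorem mem_pst_of_triple_guarded {σ : Type*} {P P' C : σ → σ → Prop} {B : σ → Prop}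
    (hP' : pst P ∩ {s | B s} ⊆ pst P') (h : triple P' C P) :
    ∀ u v, u ∈ pst P → seqc (test B) C u v → v ∈ pst P := by
  rintro u v hu ⟨_, ⟨rfl, hBu⟩, hC⟩
  obtain ⟨s, hs⟩ := hP' ⟨hu, hBu⟩
  exact h ⟨s, _, hs, hC⟩

theorem pst_seqc_whileRel_subset {σ : Type*} {P C : σ → σ → Prop} {B : σ → Prop}
    (hinv : ∀ u v, u ∈ pst P → seqc (test B) C u v → v ∈ pst P) :
    pst (seqc P (whileRel B C)) ⊆ pst P ∩ {s | ¬ B s} := by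
  rintro t ⟨s, u, hsu, n, v, hut, rfl, hnB⟩
  exact ⟨mem_of_iter hinv hut ⟨s, hsu⟩, hnB⟩

theorem while_sound {σ : Type*} (P P' Q : σ → σ → Prop) (B : σ → Prop)
    (C : σ → σ → Prop)
    (hP' : pst P' = pst P ∩ {s | B s})
    (hQ : pst Q = pst P ∩ {s | ¬ B s})
    (h : triple P' C P) :
    triple P (whileRel B C) Q := by
  rw [triple, hQ]
  exact pst_seqc_whileRel_subset (mem_pst_of_triple_guarded hP'.ge h)
end

section
/- (Soundness of the One-way If rule) Let P, P', P'', Q be programs, B a predicate on states, and C the relation of the branch. Assume pst(P') = pst(P) ∩ {s | B s}, pst(P'') = pst(P) ∩ {s | ¬ B s}, the operational triple ⟨P'⟩ C ⟨Q⟩ holds, and pst(P'') ⊆ pst(Q). Then the operational triple ⟨P⟩ if B then C ⟨Q⟩ holds, where the relation of the one-way conditional is (test B ; C) ∪ test(¬B). -/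
/-! Post-states of `P ; if B then C` split into the `B`-branch, which is `(P ; test B) ; C`,
and the `¬B`-branch, whose post-states are those of `P` failing `B`. The hypotheses identify
`P ; test B` with `P'` and `P ; test ¬B` with `P''` up to post-states, and the post-states of a
sequential composition depend on its first component only through that component's
post-states. -/

section

variable {σ : Type*}

theorem seqc_assoc (R S T : σ → σ → Prop) :
    seqc (seqc R S) T = seqc R (seqc S T) := by
  ext s t
  constructor
  · rintro ⟨v, ⟨u, hRu, hSv⟩, hTt⟩
    exact ⟨u, hRu, v, hSv, hTt⟩
  · rintro ⟨u, hRu, v, hSv, hTt⟩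
    exact ⟨v, ⟨u, hRu, hSv⟩, hTt⟩

theorem pst_seqc_or (R S T : σ → σ → Prop) :
    pst (seqc R (fun s t => S s t ∨ T s t)) = pst (seqc R S) ∪ pst (seqc R T) := by
  ext t
  constructor
  · rintro ⟨s, u, hRu, hS | hT⟩
    · exact Or.inl ⟨s, u, hRu, hS⟩
    · exact Or.inr ⟨s, u, hRu, hT⟩
  · rintro (⟨s, u, hRu, hS⟩ | ⟨s, u, hRu, hT⟩)
    · exact ⟨s, u, hRu, Or.inl hS⟩
    · exact ⟨s, u, hRu, Or.inr hT⟩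

theorem pst_seqc_test (R : σ → σ → Prop) (B : σ → Prop) :
    pst (seqc R (test B)) = pst R ∩ {s | B s} := by
  ext t
  constructor
  · rintro ⟨s, u, hRu, rfl, hB⟩
    exact ⟨⟨s, hRu⟩, hB⟩
  · rintro ⟨⟨s, hRt⟩, hB⟩
    exact ⟨s, t, hRt, rfl, hB⟩

theorem pst_seqc_mono_left {R R' : σ → σ → Prop} (hR : pst R ⊆ pst R') (S : σ → σ → Prop) :
    pst (seqc R S) ⊆ pst (seqc R' S) := by
  rintro t ⟨s, u, hRu, hSt⟩
  obtain ⟨s', hR'u⟩ := hR ⟨s, hRu⟩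
  exact ⟨s', u, hR'u, hSt⟩

end

theorem one_way_if_sound {σ : Type*} (P P' P'' Q : σ → σ → Prop) (B : σ → Prop)
    (C : σ → σ → Prop)
    (hP' : pst P' = pst P ∩ {s | B s})
    (hP'' : pst P'' = pst P ∩ {s | ¬ B s})
    (h : triple P' C Q) (hord : pst P'' ⊆ pst Q) :
    triple P (fun s t => seqc (test B) C s t ∨ test (fun s => ¬ B s) s t) Q := by
  have then_branch : pst (seqc P (seqc (test B) C)) ⊆ pst Q := by
    rw [← seqc_assoc]
    exact (pst_seqc_mono_left ((pst_seqc_test P B).trans hP'.symm).subset C).trans h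
  have else_branch : pst (seqc P (test fun s => ¬ B s)) ⊆ pst Q :=
    ((pst_seqc_test P _).trans hP''.symm).subset.trans hord
  unfold triple
  rw [pst_seqc_or]
  exact Set.union_subset then_branch else_branch
end
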